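/- Let t > 1 and s, k1, k2, k3 ∈ ℝ. Suppose F : (0,∞)^2 → ℝ is twice continuously differentiable, and define G : (0,∞)^6 → ℝ by G(u1,v1,u2,v2,u3,v3) = F(u1 v1/(u3 v3), u2 v2/(u3 v3)) · (v1/u1)^{k2} · (v2/u2)^{k3} · (v3/u3)^{k1} · (u3 v3)^s. Assume that on all of (0,∞)^6 the mixed second partial derivatives satisfy ∂²G/∂u1∂v1 = ∂²G/∂u2∂v2 = ∂²G/∂u3∂v3. Define, for x1, x2, x3 > t, u = t^2 (x1-1)(x2-1)(x3-1)/((t-1)^2 x1 x2 x3), v = (x1-t)(x2-t)(x3-t)/((t-1)^2 x1 x2 x3), and K(x1,x2,x3) = (x1 x2 x3)^s F(u,v). Then D_{x1} K = D_{x2} K = D_{x3} K on the region {x1, x2, x3 > t}, where D_x is the differential operator D_x f = d/dx ( x(x-1)(x-t) df/dx ) - s(s+2) x f - (k1^2 t / x) f + (k2^2 (t-1)/(x-1)) f - (k3^2 t(t-1)/(x-t)) f applied in the corresponding variable. -/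

import Mathlib

/-- The second-order operator `D_x` of the quantized Hitchin system for rank 2 bundles on `P¹`
with 4 regular singular points `0, 1, t, ∞`:
`D_x f = d/dx (x(x-1)(x-t) f') - s(s+2)x f - k1²t/x f + k2²(t-1)/(x-1) f - k3²t(t-1)/(x-t) f`. -/
noncomputable def hitchinOp (t s k1 k2 k3 : ℝ) (f : ℝ → ℝ) (x : ℝ) : ℝ :=
  deriv (fun y => y * (y - 1) * (y - t) * deriv f y) x -
    s * (s + 2) * x * f x - k1 ^ 2 * t / x * f x +
    k2 ^ 2 * (t - 1) / (x - 1) * f x - k3 ^ 2 * t * (t - 1) / (x - t) * f x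

/-- The auxiliary function `G(u1,v1,u2,v2,u3,v3)` built from `F` in Theorem 3.3.2. -/
noncomputable def auxG13 (s k1 k2 k3 : ℝ) (F : ℝ × ℝ → ℝ) (u1 v1 u2 v2 u3 v3 : ℝ) : ℝ :=
  F (u1 * v1 / (u3 * v3), u2 * v2 / (u3 * v3)) *
    (v1 / u1) ^ k2 * (v2 / u2) ^ k3 * (v3 / u3) ^ k1 * (u3 * v3) ^ s

/-- The kernel `K(x1,x2,x3) = (x1 x2 x3)^s F(u,v)` of Theorem 3.3.2. -/
noncomputable def kern13 (t s : ℝ) (F : ℝ × ℝ → ℝ) (x1 x2 x3 : ℝ) : ℝ :=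
  (x1 * x2 * x3) ^ s *
    F (t ^ 2 * (x1 - 1) * (x2 - 1) * (x3 - 1) / ((t - 1) ^ 2 * (x1 * x2 * x3)),
       (x1 - t) * (x2 - t) * (x3 - t) / ((t - 1) ^ 2 * (x1 * x2 * x3)))

/-!
Along each variable the kernel is `(c x)^s F(u, v)` with `u = A (x-1)/x`, `v = B (x-t)/x`, so the
chain rule expresses `D_x K` through the Euler operators `θ₁ = u ∂_u`, `θ₂ = v ∂_v` applied to `F`.
On the other side, on the points `(P, 1, Q, 1, 1, 1)` each mixed partial `∂_{u_i} ∂_{v_i} G` is an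
Euler operator in one variable, and the system for `G` reads
`(θ₁² - k2²) F = u ((θ₁ + θ₂ - s)² - k1²) F` and `(θ₂² - k3²) F = v ((θ₁ + θ₂ - s)² - k1²) F`.
Substituted into `D_x K`, these leave an expression in `u`, `v` and `x1 x2 x3` alone, which is
therefore the same for the three variables.
-/

open Set Filter Topology

noncomputable def pderiv₁ (F : ℝ × ℝ → ℝ) (p : ℝ × ℝ) : ℝ := fderiv ℝ F p (1, 0)

noncomputable def pderiv₂ (F : ℝ × ℝ → ℝ) (p : ℝ × ℝ) : ℝ := fderiv ℝ F p (0, 1)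

theorem DifferentiableAt.hasDerivAt_comp_prodMk {H : ℝ × ℝ → ℝ} {u v : ℝ → ℝ} {u' v' x : ℝ}
    (hH : DifferentiableAt ℝ H (u x, v x)) (hu : HasDerivAt u u' x) (hv : HasDerivAt v v' x) :
    HasDerivAt (fun y => H (u y, v y))
      (pderiv₁ H (u x, v x) * u' + pderiv₂ H (u x, v x) * v') x := by
  refine (hH.hasFDerivAt.comp_hasDerivAt x (hu.prodMk hv)).congr_deriv ?_
  have hdir : ((u', v') : ℝ × ℝ) = u' • ((1 : ℝ), (0 : ℝ)) + v' • ((0 : ℝ), (1 : ℝ)) := by simp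
  rw [hdir, map_add, map_smul, map_smul, smul_eq_mul, smul_eq_mul, mul_comm u', mul_comm v']
  rfl

theorem ContDiffOn.differentiableAt_fderiv_apply {F : ℝ × ℝ → ℝ} {U : Set (ℝ × ℝ)} {p : ℝ × ℝ}
    (hU : IsOpen U) (hF : ContDiffOn ℝ 2 F U) (hp : p ∈ U) (w : ℝ × ℝ) : DifferentiableAt ℝ (fun q => fderiv ℝ F q w) p :=
  (((hF.fderiv_of_isOpen (m := 1) hU (by norm_num)).clm_apply contDiffOn_const).contDiffAt
    (hU.mem_nhds hp)).differentiableAt (by norm_num)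

def HasDeriv2At (f f' : ℝ → ℝ) (f'' x : ℝ) : Prop :=
  (∀ᶠ y in 𝓝 x, HasDerivAt f (f' y) y) ∧ HasDerivAt f' f'' x

theorem hasDeriv2At_const (c x : ℝ) : HasDeriv2At (fun _ => c) (fun _ => 0) 0 x :=
  ⟨Eventually.of_forall fun y => hasDerivAt_const y c, hasDerivAt_const x 0⟩

theorem hasDeriv2At_id (x : ℝ) : HasDeriv2At (fun y => y) (fun _ => 1) 0 x :=
  ⟨Eventually.of_forall fun y => hasDerivAt_id' y, hasDerivAt_const x 1⟩

theorem hasDeriv2At_rpow_const (p : ℝ) {x : ℝ} (hx : 0 < x) :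
    HasDeriv2At (fun y => y ^ p) (fun y => p * y ^ p / y) (p * (p - 1) * x ^ p / x ^ 2) x := by
  refine ⟨eventually_of_mem (Ioi_mem_nhds hx) fun y (hy : 0 < y) => ?_, ?_⟩
  · simpa [Real.rpow_sub_one hy.ne', mul_div_assoc] using
      Real.hasDerivAt_rpow_const (p := p) (Or.inl hy.ne')
  · refine (((Real.hasDerivAt_rpow_const (Or.inl hx.ne')).const_mul p).fun_div
      (hasDerivAt_id' x) hx.ne').congr_deriv ?_
    rw [Real.rpow_sub_one hx.ne']
    field_simp

theorem hasDeriv2At_const_div (a : ℝ) {x : ℝ} (hx : x ≠ 0) :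
    HasDeriv2At (fun y => a / y) (fun y => -a / y ^ 2) (2 * a / x ^ 3) x := by
  refine ⟨eventually_of_mem (isOpen_ne.mem_nhds hx) fun y (hy : y ≠ 0) => ?_, ?_⟩
  · exact ((hasDerivAt_const y a).fun_div (hasDerivAt_id' y) hy).congr_deriv (by field_simp; ring)
  · exact ((hasDerivAt_const x (-a)).fun_div (hasDerivAt_pow 2 x) (pow_ne_zero 2 hx)).congr_deriv
      (by field_simp; ring)

theorem hasDeriv2At_mul_sub_div (a b : ℝ) {x : ℝ} (hx : x ≠ 0) :
    HasDeriv2At (fun y => a * (y - b) / y) (fun y => a * b / y ^ 2) (-2 * (a * b) / x ^ 3) x := by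
  refine ⟨eventually_of_mem (isOpen_ne.mem_nhds hx) fun y (hy : y ≠ 0) => ?_, ?_⟩
  · exact ((((hasDerivAt_id' y).sub_const b).const_mul a).fun_div (hasDerivAt_id' y)
      hy).congr_deriv (by field_simp; ring)
  · exact ((hasDerivAt_const x (a * b)).fun_div (hasDerivAt_pow 2 x) (pow_ne_zero 2 hx)).congr_deriv
      (by field_simp; ring)

namespace HasDeriv2At

variable {f g f' g' : ℝ → ℝ} {f'' g'' x : ℝ}

theorem hasDerivAt (h : HasDeriv2At f f' f'' x) : HasDerivAt f (f' x) x :=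
  h.1.self_of_nhds

theorem congr_of_eventuallyEq (h : HasDeriv2At f f' f'' x) (hg : g =ᶠ[𝓝 x] f) :
    HasDeriv2At g f' f'' x :=
  ⟨(h.1.and hg.eventuallyEq_nhds).mono fun _ hy => hy.1.congr_of_eventuallyEq hy.2, h.2⟩

theorem mul (hf : HasDeriv2At f f' f'' x) (hg : HasDeriv2At g g' g'' x) :
    HasDeriv2At (fun y => f y * g y) (fun y => f' y * g y + f y * g' y)
      (f'' * g x + 2 * (f' x * g' x) + f x * g'') x :=
  ⟨(hf.1.and hg.1).mono fun _ hy => hy.1.fun_mul hy.2,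
    ((hf.2.fun_mul hg.hasDerivAt).fun_add (hf.hasDerivAt.fun_mul hg.2)).congr_deriv (by ring)⟩

theorem comp_prodMk {F : ℝ × ℝ → ℝ} {U : Set (ℝ × ℝ)} (hU : IsOpen U) (hF : ContDiffOn ℝ 2 F U)
    {u v u' v' : ℝ → ℝ} {u'' v'' : ℝ} (hu : HasDeriv2At u u' u'' x) (hv : HasDeriv2At v v' v'' x)
    (hx : (u x, v x) ∈ U) :
    HasDeriv2At (fun y => F (u y, v y))
      (fun y => pderiv₁ F (u y, v y) * u' y + pderiv₂ F (u y, v y) * v' y)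
      ((pderiv₁ (pderiv₁ F) (u x, v x) * u' x + pderiv₂ (pderiv₁ F) (u x, v x) * v' x) * u' x
        + pderiv₁ F (u x, v x) * u'' +
      ((pderiv₁ (pderiv₂ F) (u x, v x) * u' x + pderiv₂ (pderiv₂ F) (u x, v x) * v' x) * v' x
        + pderiv₂ F (u x, v x) * v'')) x := by
  have hmem : ∀ᶠ y in 𝓝 x, (u y, v y) ∈ U :=
    (hu.hasDerivAt.continuousAt.prodMk hv.hasDerivAt.continuousAt).preimage_mem_nhds
      (hU.mem_nhds hx)
  refine ⟨(hmem.and (hu.1.and hv.1)).mono fun y hy => ?_, ?_⟩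
  · exact ((hF.contDiffAt (hU.mem_nhds hy.1)).differentiableAt
      (by norm_num)).hasDerivAt_comp_prodMk hy.2.1 hy.2.2
  · have h₁ := (hF.differentiableAt_fderiv_apply hU hx (1, 0)).hasDerivAt_comp_prodMk
      hu.hasDerivAt hv.hasDerivAt
    have h₂ := (hF.differentiableAt_fderiv_apply hU hx (0, 1)).hasDerivAt_comp_prodMk
      hu.hasDerivAt hv.hasDerivAt
    exact (h₁.fun_mul hu.2).fun_add (h₂.fun_mul hv.2)

theorem hitchinOp_eq (t s k1 k2 k3 : ℝ) (h : HasDeriv2At f f' f'' x) :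
    hitchinOp t s k1 k2 k3 f x =
      x * (x - 1) * (x - t) * f'' + ((x - 1) * (x - t) + x * (x - t) + x * (x - 1)) * f' x -
        s * (s + 2) * x * f x - k1 ^ 2 * t / x * f x +
        k2 ^ 2 * (t - 1) / (x - 1) * f x - k3 ^ 2 * t * (t - 1) / (x - t) * f x := by
  have hderiv : (fun y => y * (y - 1) * (y - t) * deriv f y) =ᶠ[𝓝 x]
      fun y => y * (y - 1) * (y - t) * f' y :=
    h.1.mono fun y hy => by simp only [hy.deriv]
  have hcubic : HasDerivAt (fun y : ℝ => y * (y - 1) * (y - t))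
      ((x - 1) * (x - t) + x * (x - t) + x * (x - 1)) x := by
    refine ((((hasDerivAt_id' x).fun_mul ((hasDerivAt_id' x).sub_const 1)).fun_mul
      ((hasDerivAt_id' x).sub_const t))).congr_deriv ?_
    ring
  rw [hitchinOp, hderiv.deriv_eq, (hcubic.fun_mul h.2).deriv]
  ring

/-- With `θ = a d/da`, this is `∂_a ∂_b [f(ab) (b/a)^k] = a^{-k-1} (θ² - k²) f` on `b = 1`. -/
theorem deriv_deriv_mul_div_rpow (k : ℝ) (ha : 0 < x) (h : HasDeriv2At f f' f'' x) :
    deriv (fun a => deriv (fun b => f (a * b) * (b / a) ^ k) 1) x =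
      (x ^ 2 * f'' + x * f' x - k ^ 2 * f x) / (x ^ k * x) := by
  have hinner : (fun a => deriv (fun b => f (a * b) * (b / a) ^ k) 1) =ᶠ[𝓝 x]
      fun a => (a * f' a + k * f a) / a ^ k := by
    filter_upwards [h.1, Ioi_mem_nhds ha] with a hfa (ha : 0 < a)
    have hf : HasDerivAt (fun b => f (a * b)) (f' a * a) 1 := by
      have hfa' : HasDerivAt f (f' a) (a * 1) := by rwa [mul_one]
      exact (hfa'.comp 1 ((hasDerivAt_id' 1).const_mul a)).congr_deriv (by rw [mul_one])
    have hpow : HasDerivAt (fun b => (b / a) ^ k) (k / a ^ k) 1 := by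
      have := ((hasDerivAt_id' (1 : ℝ)).div_const a).rpow_const (p := k) (Or.inl (by positivity))
      refine this.congr_deriv ?_
      rw [Real.rpow_sub_one (by positivity), Real.div_rpow zero_le_one ha.le, Real.one_rpow]
      field_simp
    rw [(hf.fun_mul hpow).deriv, mul_one, Real.div_rpow zero_le_one ha.le, Real.one_rpow]
    ring
  have hnum : HasDerivAt (fun a => a * f' a + k * f a) (f' x + x * f'' + k * f' x) x := by
    refine (((hasDerivAt_id' x).fun_mul h.2).fun_add (h.hasDerivAt.const_mul k)).congr_deriv ?_
    ring
  have hden := (hasDeriv2At_rpow_const k ha).hasDerivAt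
  have hxk : x ^ k ≠ 0 := (Real.rpow_pos_of_pos ha k).ne'
  rw [hinner.deriv_eq, (hnum.fun_div hden hxk).deriv]
  field_simp
  ring


end HasDeriv2At

/-- With `θ₁ = u ∂_u` and `θ₂ = v ∂_v`, these are `(θ₁² - k²) F`, `(θ₂² - k²) F` and
`((θ₁ + θ₂ - s)² - k²) F` at `(u, v)`. -/
noncomputable def thetaSqFst (k : ℝ) (F : ℝ × ℝ → ℝ) (u v : ℝ) : ℝ :=
  u ^ 2 * pderiv₁ (pderiv₁ F) (u, v) + u * pderiv₁ F (u, v) - k ^ 2 * F (u, v)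

noncomputable def thetaSqSnd (k : ℝ) (F : ℝ × ℝ → ℝ) (u v : ℝ) : ℝ :=
  v ^ 2 * pderiv₂ (pderiv₂ F) (u, v) + v * pderiv₂ F (u, v) - k ^ 2 * F (u, v)

noncomputable def thetaSqSum (s k : ℝ) (F : ℝ × ℝ → ℝ) (u v : ℝ) : ℝ :=
  u ^ 2 * pderiv₁ (pderiv₁ F) (u, v) +
    u * v * (pderiv₂ (pderiv₁ F) (u, v) + pderiv₁ (pderiv₂ F) (u, v)) +
    v ^ 2 * pderiv₂ (pderiv₂ F) (u, v) +
    (1 - 2 * s) * (u * pderiv₁ F (u, v) + v * pderiv₂ F (u, v)) + (s ^ 2 - k ^ 2) * F (u, v)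

section MixedPartials

variable {s k1 k2 k3 P Q : ℝ} {F : ℝ × ℝ → ℝ}

theorem deriv_deriv_auxG13_u1v1 (hF : ContDiffOn ℝ 2 F (Ioi 0 ×ˢ Ioi 0)) (hP : 0 < P) (hQ : 0 < Q) :
    deriv (fun a => deriv (fun b => auxG13 s k1 k2 k3 F a b Q 1 1 1) 1) P =
      thetaSqFst k2 F P Q / (P ^ k2 * Q ^ k3 * P) := by
  have hG : ∀ a b,
      auxG13 s k1 k2 k3 F a b Q 1 1 1 = F (a * b, Q) * (1 / Q) ^ k3 * (b / a) ^ k2 := by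
    intro a b
    simp only [auxG13, mul_one, div_one, Real.one_rpow]
    ring
  have hf := ((hasDeriv2At_id P).comp_prodMk (isOpen_Ioi.prod isOpen_Ioi) hF (hasDeriv2At_const Q P)
    ⟨hP, hQ⟩).mul (hasDeriv2At_const ((1 / Q) ^ k3) P)
  simp only [hG]
  rw [hf.deriv_deriv_mul_div_rpow k2 hP, thetaSqFst, Real.div_rpow zero_le_one hQ.le, Real.one_rpow]
  field_simp
  ring

theorem deriv_deriv_auxG13_u2v2 (hF : ContDiffOn ℝ 2 F (Ioi 0 ×ˢ Ioi 0)) (hP : 0 < P) (hQ : 0 < Q) :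
    deriv (fun a => deriv (fun b => auxG13 s k1 k2 k3 F P 1 a b 1 1) 1) Q =
      thetaSqSnd k3 F P Q / (P ^ k2 * Q ^ k3 * Q) := by
  have hG : ∀ a b,
      auxG13 s k1 k2 k3 F P 1 a b 1 1 = F (P, a * b) * (1 / P) ^ k2 * (b / a) ^ k3 := by
    intro a b
    simp only [auxG13, mul_one, div_one, Real.one_rpow]
  have hf := ((hasDeriv2At_const P Q).comp_prodMk (isOpen_Ioi.prod isOpen_Ioi) hF (hasDeriv2At_id Q)
    ⟨hP, hQ⟩).mul (hasDeriv2At_const ((1 / P) ^ k2) Q)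
  simp only [hG]
  rw [hf.deriv_deriv_mul_div_rpow k3 hQ, thetaSqSnd, Real.div_rpow zero_le_one hP.le, Real.one_rpow]
  field_simp
  ring

theorem deriv_deriv_auxG13_u3v3 (hF : ContDiffOn ℝ 2 F (Ioi 0 ×ˢ Ioi 0)) (hP : 0 < P) (hQ : 0 < Q) :
    deriv (fun a => deriv (fun b => auxG13 s k1 k2 k3 F P 1 Q 1 a b) 1) 1 =
      thetaSqSum s k1 F P Q / (P ^ k2 * Q ^ k3) := by
  have hG : ∀ a b, auxG13 s k1 k2 k3 F P 1 Q 1 a b =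
      (1 / P) ^ k2 * (1 / Q) ^ k3 * ((a * b) ^ s * F (P / (a * b), Q / (a * b))) *
        (b / a) ^ k1 := by
    intro a b
    simp only [auxG13, mul_one]
    ring
  have hf := (hasDeriv2At_const ((1 / P) ^ k2 * (1 / Q) ^ k3) 1).mul
    ((hasDeriv2At_rpow_const s one_pos).mul
      ((hasDeriv2At_const_div P one_ne_zero).comp_prodMk (isOpen_Ioi.prod isOpen_Ioi) hF
        (hasDeriv2At_const_div Q one_ne_zero) (by simpa using And.intro hP hQ)))
  simp only [hG]
  rw [hf.deriv_deriv_mul_div_rpow k1 one_pos, thetaSqSum, Real.div_rpow zero_le_one hP.le,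
    Real.div_rpow zero_le_one hQ.le]
  simp only [Real.one_rpow, div_one, one_pow]
  field_simp
  ring

end MixedPartials

noncomputable def kernSlice (t s : ℝ) (F : ℝ × ℝ → ℝ) (c A B y : ℝ) : ℝ :=
  (c * y) ^ s * F (A * (y - 1) / y, B * (y - t) / y)

/-- The relation `hABc` holds for every slice of `kern13`; it is what makes the value depend on `x`
only through `u`, `v` and `c x`. -/
theorem hitchinOp_kernSlice {t s k1 k2 k3 c A B x u v : ℝ} {F : ℝ × ℝ → ℝ}
    (hF : ContDiffOn ℝ 2 F (Ioi 0 ×ˢ Ioi 0)) (hc : 0 < c) (hx : 0 < x) (hx1 : x ≠ 1)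
    (hxt : x ≠ t) (hu : A * (x - 1) / x = u) (hv : B * (x - t) / x = v) (hu0 : 0 < u)
    (hv0 : 0 < v) (hABc : (1 - t) * A + t * (t - 1) * B + t = t ^ 2 / c)
    (h₁ : thetaSqFst k2 F u v = u * thetaSqSum s k1 F u v)
    (h₂ : thetaSqSnd k3 F u v = v * thetaSqSum s k1 F u v) :
    hitchinOp t s k1 k2 k3 (kernSlice t s F c A B) x =
      (c * x) ^ s * (t ^ 2 / (c * x) * thetaSqSum s k1 F u v +
        (2 * s + 1) * (u * pderiv₁ F (u, v) + t * v * pderiv₂ F (u, v)) -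
        s * (s + 1) * (1 + t) * F (u, v)) := by
  subst hu hv
  have hf := (((hasDeriv2At_const (c ^ s) x).mul (hasDeriv2At_rpow_const s hx)).mul
    ((hasDeriv2At_mul_sub_div A 1 hx.ne').comp_prodMk (isOpen_Ioi.prod isOpen_Ioi) hF
      (hasDeriv2At_mul_sub_div B t hx.ne') ⟨hu0, hv0⟩)).congr_of_eventuallyEq
    (g := kernSlice t s F c A B) (eventually_of_mem (Ioi_mem_nhds hx) fun y (hy : 0 < y) => by
      simp only [kernSlice, Real.mul_rpow hc.le hy.le])
  rw [hf.hitchinOp_eq]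
  simp only [kernSlice, thetaSqFst, thetaSqSnd] at h₁ h₂ ⊢
  rw [Real.mul_rpow hc.le hx.le]
  have hx1' := sub_ne_zero.mpr hx1
  have hxt' := sub_ne_zero.mpr hxt
  linear_combination (norm := skip) c ^ s * x ^ s / x *
    ((1 - t) * x / (x - 1) * h₁ + t * (t - 1) * x / (x - t) * h₂ +
      thetaSqSum s k1 F (A * (x - 1) / x) (B * (x - t) / x) * hABc)
  simp only [thetaSqSum]
  field_simp
  ring

theorem thetaSq_relations_of_auxG13 {s k1 k2 k3 P Q : ℝ} {F : ℝ × ℝ → ℝ}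
    (hF : ContDiffOn ℝ 2 F (Ioi 0 ×ˢ Ioi 0)) (hP : 0 < P) (hQ : 0 < Q)
    (hG : deriv (fun a => deriv (fun b => auxG13 s k1 k2 k3 F a b Q 1 1 1) 1) P =
        deriv (fun a => deriv (fun b => auxG13 s k1 k2 k3 F P 1 a b 1 1) 1) Q ∧
      deriv (fun a => deriv (fun b => auxG13 s k1 k2 k3 F P 1 a b 1 1) 1) Q =
        deriv (fun a => deriv (fun b => auxG13 s k1 k2 k3 F P 1 Q 1 a b) 1) 1) :
    thetaSqFst k2 F P Q = P * thetaSqSum s k1 F P Q ∧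
      thetaSqSnd k3 F P Q = Q * thetaSqSum s k1 F P Q := by
  obtain ⟨h₁₂, h₂₃⟩ := hG
  rw [deriv_deriv_auxG13_u1v1 hF hP hQ, deriv_deriv_auxG13_u2v2 hF hP hQ] at h₁₂
  rw [deriv_deriv_auxG13_u2v2 hF hP hQ, deriv_deriv_auxG13_u3v3 hF hP hQ] at h₂₃
  have hP' := (Real.rpow_pos_of_pos hP k2).ne'
  have hQ' := (Real.rpow_pos_of_pos hQ k3).ne'
  field_simp at h₁₂ h₂₃
  refine ⟨mul_right_cancel₀ hQ.ne' ?_, h₂₃⟩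
  linear_combination h₁₂ + P * h₂₃

section Kernel

variable {t s : ℝ} {F : ℝ × ℝ → ℝ}

theorem kern13_comm₁₂ (x y z : ℝ) : kern13 t s F x y z = kern13 t s F y x z := by
  unfold kern13
  ring_nf

theorem kern13_rotate (x y z : ℝ) : kern13 t s F x y z = kern13 t s F z x y := by
  unfold kern13
  ring_nf

theorem kern13_eq_kernSlice (y z : ℝ) :
    (fun x => kern13 t s F x y z) = kernSlice t s F (y * z)
      (t ^ 2 * (y - 1) * (z - 1) / ((t - 1) ^ 2 * (y * z)))
      ((y - t) * (z - t) / ((t - 1) ^ 2 * (y * z))) := by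
  ext x
  simp only [kern13, kernSlice, div_eq_mul_inv, mul_inv]
  ring_nf

theorem hitchinOp_kern13_fst {k1 k2 k3 u v P : ℝ} (hF : ContDiffOn ℝ 2 F (Ioi 0 ×ˢ Ioi 0))
    (ht : 1 < t) (hrel : ∀ p q, 0 < p → 0 < q → thetaSqFst k2 F p q = p * thetaSqSum s k1 F p q ∧
      thetaSqSnd k3 F p q = q * thetaSqSum s k1 F p q) ⦃x y z : ℝ⦄
    (hx : t < x) (hy : t < y) (hz : t < z)
    (hu : t ^ 2 * (x - 1) * (y - 1) * (z - 1) / ((t - 1) ^ 2 * (x * y * z)) = u)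
    (hv : (x - t) * (y - t) * (z - t) / ((t - 1) ^ 2 * (x * y * z)) = v) (hP : x * y * z = P) :
    hitchinOp t s k1 k2 k3 (fun w => kern13 t s F w y z) x =
      P ^ s * (t ^ 2 / P * thetaSqSum s k1 F u v +
        (2 * s + 1) * (u * pderiv₁ F (u, v) + t * v * pderiv₂ F (u, v)) -
        s * (s + 1) * (1 + t) * F (u, v)) := by
  have ht0 : 0 < t - 1 := sub_pos.mpr ht
  have hx1 : 0 < x - 1 := by linarith
  have hy1 : 0 < y - 1 := by linarith
  have hz1 : 0 < z - 1 := by linarith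
  have hxt : 0 < x - t := sub_pos.mpr hx
  have hyt : 0 < y - t := sub_pos.mpr hy
  have hzt : 0 < z - t := sub_pos.mpr hz
  have hx0 : 0 < x := by linarith
  have hy0 : 0 < y := by linarith
  have hz0 : 0 < z := by linarith
  have hu0 : 0 < u := hu ▸ by positivity
  have hv0 : 0 < v := hv ▸ by positivity
  obtain ⟨h₁, h₂⟩ := hrel u v hu0 hv0
  rw [kern13_eq_kernSlice, hitchinOp_kernSlice hF (by positivity) hx0 (by linarith : 1 < x).ne'
    hx.ne' (by rw [← hu]; field_simp) (by rw [← hv]; field_simp) hu0 hv0 (by field_simp; ring)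
    h₁ h₂,
    show y * z * x = P by rw [← hP]; ring]

end Kernel

/-- Theorem 3.3.2 (proof): if `G` satisfies `∂²G/∂u1∂v1 = ∂²G/∂u2∂v2 = ∂²G/∂u3∂v3` on the
positive octant, then `K = (x1x2x3)^s F(u,v)` satisfies `D_{x1}K = D_{x2}K = D_{x3}K`. -/
theorem kern13_D_equations (t : ℝ) (ht : 1 < t) (s k1 k2 k3 : ℝ)
    (F : ℝ × ℝ → ℝ)
    (hF : ContDiffOn ℝ 2 F (Set.Ioi (0:ℝ) ×ˢ Set.Ioi (0:ℝ)))
    (hG : ∀ u1 v1 u2 v2 u3 v3 : ℝ, 0 < u1 → 0 < v1 → 0 < u2 → 0 < v2 → 0 < u3 → 0 < v3 →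
      deriv (fun a => deriv (fun b => auxG13 s k1 k2 k3 F a b u2 v2 u3 v3) v1) u1 =
        deriv (fun a => deriv (fun b => auxG13 s k1 k2 k3 F u1 v1 a b u3 v3) v2) u2 ∧
      deriv (fun a => deriv (fun b => auxG13 s k1 k2 k3 F u1 v1 a b u3 v3) v2) u2 =
        deriv (fun a => deriv (fun b => auxG13 s k1 k2 k3 F u1 v1 u2 v2 a b) v3) u3) :
    ∀ x1 x2 x3 : ℝ, t < x1 → t < x2 → t < x3 →
      hitchinOp t s k1 k2 k3 (fun x => kern13 t s F x x2 x3) x1 =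
        hitchinOp t s k1 k2 k3 (fun x => kern13 t s F x1 x x3) x2 ∧
      hitchinOp t s k1 k2 k3 (fun x => kern13 t s F x1 x x3) x2 =
        hitchinOp t s k1 k2 k3 (fun x => kern13 t s F x1 x2 x) x3 := by
  intro x1 x2 x3 h1 h2 h3
  have hrel := fun P Q (hP : 0 < P) (hQ : 0 < Q) => thetaSq_relations_of_auxG13 hF hP hQ
    (hG P 1 Q 1 1 1 hP one_pos hQ one_pos one_pos one_pos)
  have slice := hitchinOp_kern13_fst hF ht hrel (P := x1 * x2 * x3)
    (u := t ^ 2 * (x1 - 1) * (x2 - 1) * (x3 - 1) / ((t - 1) ^ 2 * (x1 * x2 * x3)))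
    (v := (x1 - t) * (x2 - t) * (x3 - t) / ((t - 1) ^ 2 * (x1 * x2 * x3)))
  simp only [kern13_comm₁₂ x1 _ x3, kern13_rotate x1 x2]
  rw [slice h1 h2 h3 rfl rfl rfl, slice h2 h1 h3 (by ring) (by ring) (by ring),
    slice h3 h1 h2 (by ring) (by ring) (by ring)]
  exact ⟨rfl, rfl⟩
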